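/- arXiv:2506.14172 — 3 statements merged into one kernel-verified Lean document; each statement's English description precedes it below -/
import Mathlib

section
/- Let α, σ ∈ (0,1] and let k ∈ ℕ be such that e_{k−1}(z^α) ≠ 0 for all z ∈ Ω. Then ‖·‖_{α,k,σ} is a norm on the complex vector space D^σ_{α,k}; explicitly: (i) if f ∈ D^σ_{α,k} and ‖f‖_{α,k,σ} = 0 then f(z) = 0 for all z ∈ Ω; (ii) ‖a·f‖_{α,k,σ} = |a|·‖f‖_{α,k,σ} for all a ∈ ℂ and f ∈ D^σ_{α,k}; (iii) ‖f+g‖_{α,k,σ} ≤ ‖f‖_{α,k,σ} + ‖g‖_{α,k,σ} for all f, g ∈ D^σ_{α,k}. -/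
/-!
The norm is the `ℓ²`-combination of `√α ‖f (1/2)‖` and the `L²(Ω)`-norm of `D^σ_{α,k} f`,
that is, the norm of `(√α f(1/2), D^σ_{α,k} f)` in `ℂ × L²(Ω)`. Since `D^σ_{α,k}` is
linear, homogeneity and the triangle inequality are inherited from that product space.

For definiteness, a vanishing norm forces `f(1/2) = 0` and `D^σ_{α,k} f = 0` almost
everywhere, hence everywhere on the open set `Ω` by continuity. Then
`f' = -((1-σ)/σ) α z^{α-1} e_{k-1}(z^α) f`, and since `e_{m+1}' = e_m` the coefficient has
the primitive `-((1-σ)/σ) e_{(k-1)+1}(z^α)`. So `f · exp(((1-σ)/σ) e_{(k-1)+1}(z^α))` has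
zero derivative on the connected set `Ω` and vanishes at `1/2`.
-/

open MeasureTheory Complex

noncomputable section

/-- The unit disk minus the real segment `(-1, 0]`. -/
def Omega : Set ℂ :=
  {z : ℂ | ‖z‖ < 1 ∧ ¬ (z.im = 0 ∧ -1 < z.re ∧ z.re ≤ 0)}

/-- The truncated exponential `e_k(w) = ∑_{n=0}^k w^n / n!`. -/
def ek (k : ℕ) (w : ℂ) : ℂ := ∑ n ∈ Finset.range (k + 1), w ^ n / (n.factorial : ℂ)

/-- The generalized fractal-fractional derivative
`D^σ_{α,k} f(z) = (1-σ) f(z) + σ f'(z)/(α z^{α-1} e_{k-1}(z^α))`. -/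
def Dfrac (α σ : ℝ) (k : ℕ) (f : ℂ → ℂ) (z : ℂ) : ℂ :=
  (1 - (σ : ℂ)) * f z +
    (σ : ℂ) * deriv f z / ((α : ℂ) * z ^ ((α : ℂ) - 1) * ek (k - 1) (z ^ (α : ℂ)))

/-- The Dirichlet-type norm `‖f‖_{α,k,σ}`. -/
def Dnorm (α σ : ℝ) (k : ℕ) (f : ℂ → ℂ) : ℝ :=
  Real.sqrt (α * ‖f (1 / 2)‖ ^ 2 + ∫ z in Omega, ‖Dfrac α σ k f z‖ ^ 2)

/-- Membership in the Dirichlet-type space `D^σ_{α,k}`: holomorphic on `Ω` with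
finite Dirichlet-type integral. -/
def MemD (α σ : ℝ) (k : ℕ) (f : ℂ → ℂ) : Prop :=
  DifferentiableOn ℂ f Omega ∧ IntegrableOn (fun z => ‖Dfrac α σ k f z‖ ^ 2) Omega


section WeightedL2Norm

variable {X E : Type*} [MeasurableSpace X] {μ : Measure X} [NormedAddCommGroup E]
  {c : ℝ} {a : E} {F G : X → E}

def weightedL2Norm (c : ℝ) (a : E) (F : X → E) (μ : Measure X) : ℝ :=
  √(c * ‖a‖ ^ 2 + ∫ x, ‖F x‖ ^ 2 ∂μ)

lemma weightedL2Norm_congr_ae (h : F =ᵐ[μ] G) :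
    weightedL2Norm c a F μ = weightedL2Norm c a G μ := by
  simp only [weightedL2Norm]
  rw [integral_congr_ae (h.mono fun x hx => by rw [hx])]

lemma weightedL2Norm_smul {𝕜 : Type*} [NormedField 𝕜] [NormedSpace 𝕜 E] (t : 𝕜) :
    weightedL2Norm c (t • a) (t • F) μ = ‖t‖ * weightedL2Norm c a F μ := by
  simp only [weightedL2Norm, Pi.smul_apply, norm_smul, mul_pow, integral_const_mul]
  rw [← mul_assoc, mul_comm c, mul_assoc, ← mul_add, Real.sqrt_mul (sq_nonneg _),
    Real.sqrt_sq (norm_nonneg t)]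

lemma MeasureTheory.MemLp.norm_toLp_two (hF : MemLp F 2 μ) :
    ‖hF.toLp F‖ = √(∫ x, ‖F x‖ ^ 2 ∂μ) := by
  rw [Lp.norm_toLp, hF.eLpNorm_eq_integral_rpow_norm two_ne_zero ENNReal.ofNat_ne_top,
    ENNReal.toReal_ofReal (by positivity), Real.sqrt_eq_rpow]
  norm_num

variable [NormedSpace ℝ E]

lemma weightedL2Norm_eq_norm (hc : 0 ≤ c) (a : E) (hF : MemLp F 2 μ) :
    weightedL2Norm c a F μ = ‖WithLp.toLp 2 (√c • a, hF.toLp F)‖ := by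
  rw [WithLp.prod_norm_eq_of_L2, WithLp.toLp_fst, WithLp.toLp_snd, hF.norm_toLp_two,
    Real.sq_sqrt (integral_nonneg fun _ => sq_nonneg _), norm_smul, mul_pow,
    Real.norm_of_nonneg (Real.sqrt_nonneg c), Real.sq_sqrt hc, weightedL2Norm]

lemma weightedL2Norm_add_le (hc : 0 ≤ c) (a b : E) (hF : MemLp F 2 μ) (hG : MemLp G 2 μ) :
    weightedL2Norm c (a + b) (F + G) μ ≤ weightedL2Norm c a F μ + weightedL2Norm c b G μ := by
  rw [weightedL2Norm_eq_norm hc _ (hF.add hG), weightedL2Norm_eq_norm hc a hF,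
    weightedL2Norm_eq_norm hc b hG, MemLp.toLp_add, smul_add, ← Prod.mk_add_mk, WithLp.toLp_add]
  exact norm_add_le _ _

lemma eq_zero_of_weightedL2Norm_eq_zero (hc : 0 < c) (hF : MemLp F 2 μ)
    (h : weightedL2Norm c a F μ = 0) : a = 0 ∧ F =ᵐ[μ] 0 := by
  rw [weightedL2Norm_eq_norm hc.le a hF, norm_eq_zero, WithLp.toLp_eq_zero,
    Prod.mk_eq_zero, smul_eq_zero] at h
  exact ⟨h.1.resolve_left (Real.sqrt_ne_zero'.2 hc),
    (hF.toLp_eq_toLp_iff MemLp.zero).1 (h.2.trans (MemLp.toLp_zero _).symm)⟩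

end WeightedL2Norm

lemma Omega_eq_ball_inter_slitPlane : Omega = Metric.ball 0 1 ∩ slitPlane := by
  ext z
  simp only [Omega, Set.mem_inter_iff, Metric.mem_ball, dist_zero_right, mem_slitPlane_iff]
  refine and_congr_right fun hz => ?_
  have hre : -1 < z.re := (abs_lt.1 ((abs_re_le_norm z).trans_lt hz)).1
  constructor
  · intro h
    by_contra! h'
    exact h ⟨h'.2, hre, h'.1⟩
  · rintro (h | h) ⟨him, -, hre'⟩
    exacts [hre'.not_gt h, h him]

lemma isOpen_Omega : IsOpen Omega := by
  rw [Omega_eq_ball_inter_slitPlane]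
  exact Metric.isOpen_ball.inter isOpen_slitPlane

lemma Omega_subset_slitPlane : Omega ⊆ slitPlane := by
  rw [Omega_eq_ball_inter_slitPlane]
  exact Set.inter_subset_right

lemma half_mem_Omega : (1 / 2 : ℂ) ∈ Omega := by
  rw [Omega_eq_ball_inter_slitPlane]
  refine ⟨by norm_num, ?_⟩
  rw [mem_slitPlane_iff]
  norm_num

lemma isPreconnected_Omega : IsPreconnected Omega := by
  have hstar : StarConvex ℝ (1 / 2 : ℂ) Omega := by
    have hhalf := half_mem_Omega
    rw [Omega_eq_ball_inter_slitPlane] at hhalf ⊢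
    exact ((convex_ball 0 1).starConvex hhalf.1).inter
      (by simpa using starConvex_ofReal_slitPlane (x := 1 / 2) (by norm_num))
  exact (hstar.isPathConnected half_mem_Omega).isConnected.isPreconnected

lemma hasDerivAt_ek_succ (m : ℕ) (w : ℂ) : HasDerivAt (ek (m + 1)) (ek m w) w := by
  have hek : ek (m + 1) =
      fun w => ∑ n ∈ Finset.range (m + 1), w ^ (n + 1) / ((n + 1).factorial : ℂ) + 1 := by
    funext w
    simp [ek, Finset.sum_range_succ' _ (m + 1)]
  rw [hek]
  refine ((HasDerivAt.fun_sum fun n _ =>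
    (hasDerivAt_pow (n + 1) w).div_const _).add_const 1).congr_deriv ?_
  refine Finset.sum_congr rfl fun n _ => ?_
  rw [Nat.factorial_succ]
  push_cast
  field_simp

lemma continuous_ek (m : ℕ) : Continuous (ek m) := by
  unfold ek
  fun_prop

lemma hasDerivAt_ek_succ_cpow (m : ℕ) (α : ℂ) {z : ℂ} (hz : z ∈ slitPlane) :
    HasDerivAt (fun z => ek (m + 1) (z ^ α)) (α * z ^ (α - 1) * ek m (z ^ α)) z :=
  ((hasDerivAt_ek_succ m _).comp z (hasStrictDerivAt_cpow_const hz).hasDerivAt).congr_deriv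
    (mul_comm _ _)

def DfracDen (α : ℝ) (k : ℕ) (z : ℂ) : ℂ :=
  (α : ℂ) * z ^ ((α : ℂ) - 1) * ek (k - 1) (z ^ (α : ℂ))

section DirichletSpace

variable {α σ : ℝ} {k : ℕ} {f g : ℂ → ℂ}

lemma Dfrac_eq (f : ℂ → ℂ) (z : ℂ) :
    Dfrac α σ k f z = (1 - (σ : ℂ)) * f z + σ * deriv f z / DfracDen α k z :=
  rfl

lemma DfracDen_ne_zero (hα : α ≠ 0) (hk : ∀ z ∈ Omega, ek (k - 1) (z ^ (α : ℂ)) ≠ 0) {z : ℂ}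
    (hz : z ∈ Omega) : DfracDen α k z ≠ 0 := by
  have hz0 : z ≠ 0 := slitPlane_ne_zero (Omega_subset_slitPlane hz)
  refine mul_ne_zero (mul_ne_zero (ofReal_ne_zero.2 hα) ?_) (hk z hz)
  exact fun h => hz0 ((cpow_eq_zero_iff _ _).1 h).1

lemma continuousOn_DfracDen (α : ℝ) (k : ℕ) : ContinuousOn (DfracDen α k) Omega := fun _ hz =>
  have hpow := fun β : ℂ => continuousAt_cpow_const (b := β) (Omega_subset_slitPlane hz)
  ((continuousAt_const.mul (hpow _)).mul ((continuous_ek _).continuousAt.comp (hpow _)))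
    |>.continuousWithinAt

lemma continuousOn_Dfrac (hα : α ≠ 0) (hk : ∀ z ∈ Omega, ek (k - 1) (z ^ (α : ℂ)) ≠ 0)
    (hf : DifferentiableOn ℂ f Omega) : ContinuousOn (Dfrac α σ k f) Omega := by
  have hf' : ContinuousOn (deriv f) Omega :=
    (hf.analyticOnNhd isOpen_Omega).deriv.differentiableOn.continuousOn
  exact (continuousOn_const.mul hf.continuousOn).add
    ((continuousOn_const.mul hf').div (continuousOn_DfracDen α k)
      fun z hz => DfracDen_ne_zero hα hk hz)

lemma memLp_Dfrac (hα : α ≠ 0) (hk : ∀ z ∈ Omega, ek (k - 1) (z ^ (α : ℂ)) ≠ 0)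
    (hf : MemD α σ k f) : MemLp (Dfrac α σ k f) 2 (volume.restrict Omega) :=
  (memLp_two_iff_integrable_sq_norm
    ((continuousOn_Dfrac hα hk hf.1).aestronglyMeasurable isOpen_Omega.measurableSet)).2 hf.2

lemma Dfrac_const_mul (a : ℂ) (f : ℂ → ℂ) :
    Dfrac α σ k (fun z => a * f z) = a • Dfrac α σ k f := by
  funext z
  simp only [Dfrac, deriv_const_mul_field, Pi.smul_apply, smul_eq_mul]
  ring

lemma Dfrac_add {z : ℂ} (hf : DifferentiableAt ℂ f z) (hg : DifferentiableAt ℂ g z) :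
    Dfrac α σ k (fun w => f w + g w) z = Dfrac α σ k f z + Dfrac α σ k g z := by
  simp only [Dfrac, deriv_fun_add hf hg]
  ring

lemma deriv_eq_of_Dfrac_eq_zero (hσ : σ ≠ 0) {z : ℂ} (hden : DfracDen α k z ≠ 0)
    (h : Dfrac α σ k f z = 0) : deriv f z = -((1 - σ) / σ) * DfracDen α k z * f z := by
  have hσ' : (σ : ℂ) ≠ 0 := ofReal_ne_zero.2 hσ
  rw [Dfrac_eq] at h
  field_simp at h ⊢
  linear_combination h

lemma eqOn_zero_of_Dfrac_eq_zero (hα : α ≠ 0) (hσ : σ ≠ 0)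
    (hk : ∀ z ∈ Omega, ek (k - 1) (z ^ (α : ℂ)) ≠ 0) (hf : DifferentiableOn ℂ f Omega)
    (hD : Set.EqOn (Dfrac α σ k f) 0 Omega) (hf_half : f (1 / 2) = 0) : Set.EqOn f 0 Omega := by
  set c : ℂ := (1 - σ) / σ
  set h : ℂ → ℂ := fun z => f z * exp (c * ek (k - 1 + 1) (z ^ (α : ℂ)))
  have hh : ∀ z ∈ Omega, HasDerivAt h 0 z := by
    intro z hz
    have hfz := (hf.differentiableAt (isOpen_Omega.mem_nhds hz)).hasDerivAt
    rw [deriv_eq_of_Dfrac_eq_zero hσ (DfracDen_ne_zero hα hk hz) (hD hz)] at hfz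
    have hexp :=
      ((hasDerivAt_ek_succ_cpow (k - 1) α (Omega_subset_slitPlane hz)).const_mul c).cexp
    refine (hfz.fun_mul hexp).congr_deriv ?_
    simp only [c, DfracDen]
    ring
  have hconst : ∀ z ∈ Omega, h z = h (1 / 2) := fun z hz =>
    isOpen_Omega.is_const_of_deriv_eq_zero isPreconnected_Omega
      (fun w hw => (hh w hw).differentiableAt.differentiableWithinAt)
      (fun w hw => (hh w hw).deriv) hz half_mem_Omega
  intro z hz
  have hz' := hconst z hz
  simp only [h, hf_half, zero_mul] at hz'
  exact (mul_eq_zero.1 hz').resolve_right (exp_ne_zero _)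

lemma Dnorm_eq_weightedL2Norm (f : ℂ → ℂ) :
    Dnorm α σ k f = weightedL2Norm α (f (1 / 2)) (Dfrac α σ k f) (volume.restrict Omega) :=
  rfl

lemma Dnorm_const_mul (a : ℂ) (f : ℂ → ℂ) :
    Dnorm α σ k (fun z => a * f z) = ‖a‖ * Dnorm α σ k f := by
  rw [Dnorm_eq_weightedL2Norm, Dfrac_const_mul, ← smul_eq_mul a (f _), weightedL2Norm_smul,
    Dnorm_eq_weightedL2Norm]

lemma Dnorm_add_le (hα : 0 < α) (hk : ∀ z ∈ Omega, ek (k - 1) (z ^ (α : ℂ)) ≠ 0)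
    (hf : MemD α σ k f) (hg : MemD α σ k g) :
    Dnorm α σ k (fun z => f z + g z) ≤ Dnorm α σ k f + Dnorm α σ k g := by
  have hD : Dfrac α σ k (fun z => f z + g z) =ᵐ[volume.restrict Omega]
      Dfrac α σ k f + Dfrac α σ k g :=
    ae_restrict_of_forall_mem isOpen_Omega.measurableSet fun z hz =>
      Dfrac_add (hf.1.differentiableAt (isOpen_Omega.mem_nhds hz))
        (hg.1.differentiableAt (isOpen_Omega.mem_nhds hz))
  rw [Dnorm_eq_weightedL2Norm, weightedL2Norm_congr_ae hD]
  exact weightedL2Norm_add_le hα.le _ _ (memLp_Dfrac hα.ne' hk hf) (memLp_Dfrac hα.ne' hk hg)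

lemma eqOn_zero_of_Dnorm_eq_zero (hα : 0 < α) (hσ : σ ≠ 0)
    (hk : ∀ z ∈ Omega, ek (k - 1) (z ^ (α : ℂ)) ≠ 0) (hf : MemD α σ k f)
    (h : Dnorm α σ k f = 0) : Set.EqOn f 0 Omega := by
  obtain ⟨hf_half, hD⟩ := eq_zero_of_weightedL2Norm_eq_zero hα (memLp_Dfrac hα.ne' hk hf) h
  refine eqOn_zero_of_Dfrac_eq_zero hα.ne' hσ hk hf.1 ?_ hf_half
  exact Measure.eqOn_open_of_ae_eq hD isOpen_Omega (continuousOn_Dfrac hα.ne' hk hf.1)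
    continuousOn_const

end DirichletSpace

theorem Dnorm_is_a_norm
    (α σ : ℝ) (hα : α ∈ Set.Ioc (0 : ℝ) 1) (hσ : σ ∈ Set.Ioc (0 : ℝ) 1) (k : ℕ)
    (hk : ∀ z ∈ Omega, ek (k - 1) (z ^ (α : ℂ)) ≠ 0) :
    (∀ f : ℂ → ℂ, MemD α σ k f → Dnorm α σ k f = 0 → ∀ z ∈ Omega, f z = 0) ∧
    (∀ (a : ℂ) (f : ℂ → ℂ), MemD α σ k f →
        Dnorm α σ k (fun z => a * f z) = ‖a‖ * Dnorm α σ k f) ∧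
    (∀ f g : ℂ → ℂ, MemD α σ k f → MemD α σ k g →
        Dnorm α σ k (fun z => f z + g z) ≤ Dnorm α σ k f + Dnorm α σ k g) :=
  ⟨fun _ hf h0 _ hz => eqOn_zero_of_Dnorm_eq_zero hα.1 hσ.1.ne' hk hf h0 hz,
    fun a f _ => Dnorm_const_mul a f,
    fun _ _ hf hg => Dnorm_add_le hα.1 hk hf hg⟩
end
end

section
/- Reproducing property, first form: let α ∈ (0,1], σ ∈ (0,1) and let k ∈ ℕ be such that e_{k−1}(z^α) ≠ 0 for all z ∈ Ω. Let f be holomorphic on 𝔻 and suppose the function D^σ_{α,k} f (defined on Ω) extends to a holomorphic function g on all of 𝔻 with ∫_𝔻 |g|² dA < ∞ (i.e. g belongs to the Bergman space of 𝔻). Then for every z ∈ Ω, f(z) = −(σ/(1−σ)) · f′(z)/(α·z^{α−1}·e_{k−1}(z^α)) + (1/(1−σ)) · ∫_𝔻 B(z,ζ)·g(ζ) dA(ζ), where B(z,ζ) := 1/(π·(1 − z·conj(ζ))²) is the Bergman kernel of 𝔻. -/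
open MeasureTheory Complex

noncomputable section

/-- The open unit disk. -/
def unitDisk : Set ℂ := {z : ℂ | ‖z‖ < 1}

/-- The Bergman kernel of the unit disk, `B(z,ζ) = 1/(π (1 - z conj ζ)²)`. -/
def bergman (z ζ : ℂ) : ℂ := 1 / ((Real.pi : ℂ) * (1 - z * (starRingEnd ℂ) ζ) ^ 2)

open Metric Set Filter Topology
open scoped Real

/-! On the circle `|w| = r` one has `w - z r² = (1 - z w̄) w`, so the Bergman kernel `B(z, ·)`
becomes the Cauchy kernel for the derivative of `w ↦ w g(w)` at `z r²`: the circle integral of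
`B(z, ·) g` is `2 (g + w g')(z r²)`, which is `r⁻¹ d/dr [r² g(z r²)]`. Integrating in polar
coordinates, `∫_{|ζ|<s} B(z, ζ) g(ζ) dA = s² g(z s²)`, and letting `s → 1` (`B(z, ·)` is bounded
on `𝔻`, so `B(z, ·) g` is integrable) gives `∫_𝔻 B(z, ·) g dA = g(z)`. The formula for `f` is
then this identity applied to `g = D^σ_{α,k} f`, solved for `f(z)`. -/

lemma one_sub_norm_mul_norm_le_norm_one_sub_mul_conj (z ζ : ℂ) :
    1 - ‖z‖ * ‖ζ‖ ≤ ‖1 - z * starRingEnd ℂ ζ‖ := by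
  simpa [Complex.norm_conj] using norm_sub_norm_le (1 : ℂ) (z * starRingEnd ℂ ζ)

lemma norm_bergman_le {z ζ : ℂ} (hz : ‖z‖ < 1) (hζ : ‖ζ‖ ≤ 1) :
    ‖bergman z ζ‖ ≤ (π * (1 - ‖z‖) ^ 2)⁻¹ := by
  rw [bergman, norm_div, norm_one, one_div, norm_mul, Complex.norm_real,
    Real.norm_of_nonneg Real.pi_pos.le, norm_pow]
  have hlower := one_sub_norm_mul_norm_le_norm_one_sub_mul_conj z ζ
  have hzζ : ‖z‖ * ‖ζ‖ ≤ ‖z‖ := mul_le_of_le_one_right (norm_nonneg z) hζ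
  have hz' : 0 < 1 - ‖z‖ := by linarith
  gcongr
  linarith

lemma continuousOn_bergman {z : ℂ} (hz : ‖z‖ < 1) :
    ContinuousOn (bergman z) (closedBall 0 1) := by
  refine continuousOn_const.div (by fun_prop) fun ζ hζ => ?_
  have hlower := one_sub_norm_mul_norm_le_norm_one_sub_mul_conj z ζ
  have hzζ : ‖z‖ * ‖ζ‖ ≤ ‖z‖ :=
    mul_le_of_le_one_right (norm_nonneg z) (mem_closedBall_zero_iff.1 hζ)
  have hpos : 0 < ‖1 - z * starRingEnd ℂ ζ‖ := by linarith
  exact mul_ne_zero (Complex.ofReal_ne_zero.2 Real.pi_ne_zero) (pow_ne_zero 2 (norm_pos_iff.1 hpos))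

theorem integral_ball_eq_intervalIntegral_circleMap {E : Type*} [NormedAddCommGroup E]
    [NormedSpace ℝ E] {F : ℂ → E} {s : ℝ} (hs : 0 ≤ s) (hF : ContinuousOn F (closedBall 0 s)) :
    ∫ ζ in ball (0 : ℂ) s, F ζ = ∫ r in 0..s, r • ∫ θ in 0..2 * π, F (circleMap 0 r θ) := by
  have polar_eq_circleMap (p : ℝ × ℝ) : Complex.polarCoord.symm p = circleMap 0 p.1 p.2 := by
    rw [Complex.polarCoord_symm_apply, circleMap, zero_add, Complex.exp_mul_I,
      Complex.ofReal_cos, Complex.ofReal_sin]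
  have hball : polarCoord.target ∩ {p | circleMap 0 p.1 p.2 ∈ ball 0 s} =
      Ioo 0 s ×ˢ Ioo (-π) π := by
    ext ⟨r, θ⟩
    simp only [polarCoord_target, mem_inter_iff, mem_prod, mem_ofPred_eq, mem_ball_zero_iff,
      norm_circleMap_zero, mem_Ioi, mem_Ioo]
    constructor
    · rintro ⟨⟨hr, hθ⟩, hrs⟩; exact ⟨⟨hr, (abs_of_pos hr) ▸ hrs⟩, hθ⟩
    · rintro ⟨⟨hr, hrs⟩, hθ⟩; exact ⟨⟨hr, hθ⟩, (abs_of_pos hr).symm ▸ hrs⟩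
  have hcont : ContinuousOn (fun p : ℝ × ℝ => p.1 • F (circleMap 0 p.1 p.2))
      (Icc 0 s ×ˢ Icc (-π) π) := by
    refine continuous_fst.continuousOn.smul (hF.comp (by fun_prop) fun p hp => ?_)
    rw [mem_closedBall_zero_iff, norm_circleMap_zero, abs_of_nonneg hp.1.1]
    exact hp.1.2
  have hint : IntegrableOn (fun p : ℝ × ℝ => p.1 • F (circleMap 0 p.1 p.2))
      (Ioo 0 s ×ˢ Ioo (-π) π) :=
    (hcont.integrableOn_compact (isCompact_Icc.prod isCompact_Icc)).mono_set
      (prod_mono Ioo_subset_Icc_self Ioo_subset_Icc_self)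
  calc ∫ ζ in ball (0 : ℂ) s, F ζ
      = ∫ p in polarCoord.target, p.1 • (ball 0 s).indicator F (Complex.polarCoord.symm p) := by
        rw [Complex.integral_comp_polarCoord_symm, integral_indicator measurableSet_ball]
    _ = ∫ p in Ioo 0 s ×ˢ Ioo (-π) π, p.1 • F (circleMap 0 p.1 p.2) := by
        have hind (p : ℝ × ℝ) : p.1 • (ball 0 s).indicator F (Complex.polarCoord.symm p) =
            {p : ℝ × ℝ | circleMap 0 p.1 p.2 ∈ ball 0 s}.indicator
              (fun p => p.1 • F (circleMap 0 p.1 p.2)) p := by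
          rw [indicator_smul_apply, polar_eq_circleMap]
          exact congrArg _ (indicator_comp_right (fun p : ℝ × ℝ => circleMap 0 p.1 p.2)).symm
        simp only [hind]
        have hmeas : MeasurableSet {p : ℝ × ℝ | circleMap 0 p.1 p.2 ∈ ball 0 s} :=
          measurableSet_ball.preimage (by fun_prop)
        rw [setIntegral_indicator hmeas, hball]
    _ = ∫ r in Ioo 0 s, r • ∫ θ in Ioo (-π) π, F (circleMap 0 r θ) := by
        rw [Measure.volume_eq_prod, setIntegral_prod _ hint]
        simp only [integral_smul]
    _ = ∫ r in 0..s, r • ∫ θ in 0..2 * π, F (circleMap 0 r θ) := by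
        rw [intervalIntegral.integral_of_le hs, integral_Ioc_eq_integral_Ioo]
        refine setIntegral_congr_fun measurableSet_Ioo fun r _ => ?_
        rw [← integral_Ioc_eq_integral_Ioo,
          ← intervalIntegral.integral_of_le (by linarith [Real.pi_pos])]
        have := ((periodic_circleMap 0 r).comp F).intervalIntegral_add_eq (-π) 0
        rw [show -π + 2 * π = π by ring, zero_add] at this
        exact congrArg (r • ·) this

lemma intervalIntegral_bergman_mul_circleMap {g : ℂ → ℂ} {U : Set ℂ} {z : ℂ} {r : ℝ}
    (hU : IsOpen U) (hrU : closedBall 0 r ⊆ U) (hg : DifferentiableOn ℂ g U)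
    (hr : 0 < r) (hzr : ‖z‖ * r < 1) :
    ∫ θ in 0..2 * π, bergman z (circleMap 0 r θ) * g (circleMap 0 r θ) =
      2 * deriv (fun w => w * g w) (z * r ^ 2) := by
  have hw₀ : z * r ^ 2 ∈ ball 0 r := by
    rw [mem_ball_zero_iff, norm_mul, norm_pow, Complex.norm_real, Real.norm_of_nonneg hr.le]
    nlinarith
  have hcauchy := two_pi_I_inv_smul_circleIntegral_sub_sq_inv_smul_of_differentiable hU hrU
    (f := fun w => w * g w) (differentiableOn_id.mul hg) hw₀
  have hcirc : (∮ w in C(0, r), ((w - z * r ^ 2) ^ 2)⁻¹ • (w * g w)) =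
      π * I * ∫ θ in 0..2 * π, bergman z (circleMap 0 r θ) * g (circleMap 0 r θ) := by
    rw [circleIntegral, ← intervalIntegral.integral_const_mul]
    refine intervalIntegral.integral_congr fun θ _ => ?_
    rw [deriv_circleMap, smul_eq_mul, smul_eq_mul]
    set w := circleMap 0 r θ
    have hw : ‖w‖ = r := by rw [norm_circleMap_zero, abs_of_pos hr]
    have hw0 : w ≠ 0 := circleMap_ne_center hr.ne'
    have hsub : w - z * r ^ 2 = (1 - z * starRingEnd ℂ w) * w := by
      have : w * starRingEnd ℂ w = (r : ℂ) ^ 2 := by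
        rw [Complex.mul_conj, Complex.normSq_eq_norm_sq, hw]; norm_cast
      linear_combination z * this
    have hne : 1 - z * starRingEnd ℂ w ≠ 0 := by
      have := one_sub_norm_mul_norm_le_norm_one_sub_mul_conj z w
      rw [hw] at this
      exact norm_pos_iff.1 (by linarith)
    rw [hsub, bergman]
    field_simp
  rw [← hcauchy, hcirc, smul_eq_mul]
  field_simp

lemma hasDerivAt_ofReal_sq_mul_comp {g : ℂ → ℂ} {z : ℂ} {t : ℝ}
    (hg : DifferentiableAt ℂ g (z * t ^ 2)) :
    HasDerivAt (fun s : ℝ => (s : ℂ) ^ 2 * g (z * s ^ 2))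
      (t * (2 * deriv (fun w => w * g w) (z * t ^ 2))) t := by
  have hinner : HasDerivAt (fun w : ℂ => z * w ^ 2) (z * (2 * t)) t := by
    simpa using (hasDerivAt_pow 2 (t : ℂ)).const_mul z
  rw [deriv_fun_mul differentiableAt_fun_id hg, deriv_id'']
  refine ((hasDerivAt_pow 2 (t : ℂ)).mul
    (hg.hasDerivAt.comp (t : ℂ) hinner)).comp_ofReal.congr_deriv ?_
  simp only [Function.comp_apply]
  ring

lemma mul_ofReal_sq_mem_ball_zero_one {z : ℂ} (hz : ‖z‖ < 1) {t : ℝ} (ht : t ∈ Icc (0 : ℝ) 1) :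
    z * t ^ 2 ∈ ball (0 : ℂ) 1 := by
  rw [mem_ball_zero_iff, norm_mul, norm_pow, Complex.norm_real, Real.norm_of_nonneg ht.1]
  calc ‖z‖ * t ^ 2 ≤ ‖z‖ := mul_le_of_le_one_right (norm_nonneg z) (pow_le_one₀ ht.1 ht.2)
    _ < 1 := hz

lemma setIntegral_ball_bergman_mul_of_lt_one {g : ℂ → ℂ} (hg : DifferentiableOn ℂ g (ball 0 1))
    {z : ℂ} (hz : ‖z‖ < 1) {s : ℝ} (hs0 : 0 ≤ s) (hs1 : s < 1) :
    ∫ ζ in ball (0 : ℂ) s, bergman z ζ * g ζ = s ^ 2 * g (z * s ^ 2) := by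
  have hmaps : MapsTo (fun t : ℝ => z * t ^ 2) (uIcc 0 s) (ball 0 1) := fun t ht =>
    mul_ofReal_sq_mem_ball_zero_one hz (Icc_subset_Icc_right hs1.le (uIcc_of_le hs0 ▸ ht))
  have hcircle : ∀ r ∈ uIcc 0 s,
      r • ∫ θ in 0..2 * π, bergman z (circleMap 0 r θ) * g (circleMap 0 r θ) =
        r * (2 * deriv (fun w => w * g w) (z * r ^ 2)) := by
    intro r hr
    rw [uIcc_of_le hs0] at hr
    rcases hr.1.eq_or_lt with rfl | hr0
    · simp
    rw [intervalIntegral_bergman_mul_circleMap isOpen_ball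
      (closedBall_subset_ball (hr.2.trans_lt hs1)) hg hr0
      (mul_lt_one_of_nonneg_of_lt_one_left (norm_nonneg z) hz (hr.2.trans hs1.le)),
      Complex.real_smul]
  have hderiv : ContinuousOn (deriv fun w => w * g w) (ball 0 1) :=
    ((differentiableOn_id.mul hg).analyticOnNhd isOpen_ball).deriv.continuousOn
  have hcont : ContinuousOn (fun t : ℝ => t * (2 * deriv (fun w => w * g w) (z * t ^ 2)))
      (uIcc 0 s) :=
    Complex.continuous_ofReal.continuousOn.mul
      (continuousOn_const.mul (hderiv.comp (by fun_prop) hmaps))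
  rw [integral_ball_eq_intervalIntegral_circleMap hs0
      (((continuousOn_bergman hz).mono (closedBall_subset_closedBall hs1.le)).fun_mul
        (hg.continuousOn.mono (closedBall_subset_ball hs1))),
    intervalIntegral.integral_congr hcircle,
    intervalIntegral.integral_eq_sub_of_hasDerivAt
      (fun t ht => hasDerivAt_ofReal_sq_mul_comp
        (hg.differentiableAt (isOpen_ball.mem_nhds (hmaps ht)))) hcont.intervalIntegrable]
  simp

lemma tendsto_setIntegral_ball {X E : Type*} [PseudoMetricSpace X] [MeasurableSpace X]
    [OpensMeasurableSpace X] [NormedAddCommGroup E] [NormedSpace ℝ E] {μ : Measure X}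
    {F : X → E} {c : X} {R : ℝ} {u : ℕ → ℝ} (hu : Monotone u) (huR : ∀ n, u n < R)
    (hlim : Tendsto u atTop (𝓝 R)) (hF : IntegrableOn F (ball c R) μ) :
    Tendsto (fun n => ∫ x in ball c (u n), F x ∂μ) atTop (𝓝 (∫ x in ball c R, F x ∂μ)) := by
  have hunion : ⋃ n, ball c (u n) = ball c R := by
    ext x
    simp only [mem_iUnion, mem_ball]
    exact ⟨fun ⟨n, hn⟩ => hn.trans (huR n), fun hx => (hlim.eventually (lt_mem_nhds hx)).exists⟩
  rw [← hunion] at hF ⊢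
  exact tendsto_setIntegral_of_monotone (fun _ => measurableSet_ball)
    (fun _ _ hmn => ball_subset_ball (hu hmn)) hF

lemma integrableOn_bergman_mul {g : ℂ → ℂ} (hg : IntegrableOn g (ball 0 1)) {z : ℂ}
    (hz : ‖z‖ < 1) : IntegrableOn (fun ζ => bergman z ζ * g ζ) (ball 0 1) :=
  hg.bdd_mul (((continuousOn_bergman hz).mono ball_subset_closedBall).aestronglyMeasurable
    measurableSet_ball) ((ae_restrict_iff' measurableSet_ball).2 (ae_of_all _ fun _ hζ =>
      norm_bergman_le hz (mem_ball_zero_iff.1 hζ).le))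

theorem setIntegral_ball_one_bergman_mul {g : ℂ → ℂ} (hg : DifferentiableOn ℂ g (ball 0 1))
    (hgi : IntegrableOn g (ball 0 1)) {z : ℂ} (hz : ‖z‖ < 1) :
    ∫ ζ in ball (0 : ℂ) 1, bergman z ζ * g ζ = g z := by
  obtain ⟨u, hu, hu01, hlim⟩ := exists_seq_strictMono_tendsto' (zero_lt_one' ℝ)
  have hball := tendsto_setIntegral_ball hu.monotone (fun n => (hu01 n).2) hlim
    (integrableOn_bergman_mul hgi hz)
  have hcont : ContinuousAt (fun t : ℝ => (t : ℂ) ^ 2 * g (z * t ^ 2)) 1 := by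
    have hgz : ContinuousAt g (z * (1 : ℝ) ^ 2) := by
      simpa using hg.continuousOn.continuousAt (isOpen_ball.mem_nhds (mem_ball_zero_iff.2 hz))
    exact (by fun_prop : Continuous fun t : ℝ => (t : ℂ) ^ 2).continuousAt.mul
      (hgz.comp (f := fun t : ℝ => z * (t : ℂ) ^ 2) (by fun_prop))
  refine tendsto_nhds_unique hball ?_
  simpa [Function.comp_def, setIntegral_ball_bergman_mul_of_lt_one hg hz (hu01 _).1.le (hu01 _).2]
    using hcont.tendsto.comp hlim

lemma integrableOn_of_integrableOn_norm_sq {X E : Type*} [MeasurableSpace X]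
    [NormedAddCommGroup E] {μ : Measure X} {s : Set X} {f : X → E} (hs : μ s ≠ ⊤)
    (hf : AEStronglyMeasurable f (μ.restrict s)) (h : IntegrableOn (fun x => ‖f x‖ ^ 2) s μ) :
    IntegrableOn f s μ :=
  have := isFiniteMeasure_restrict.2 hs
  ((memLp_two_iff_integrable_sq_norm hf).2 h).integrable one_le_two

theorem reproducing_property_first_form_general
    (α σ : ℝ) (hσ : σ ∈ Set.Ioo (0 : ℝ) 1) (k : ℕ)
    (f g : ℂ → ℂ)
    (hg : DifferentiableOn ℂ g unitDisk)
    (hext : ∀ z ∈ Omega, g z = Dfrac α σ k f z)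
    (hL2 : IntegrableOn (fun z => ‖g z‖ ^ 2) unitDisk) :
    ∀ z ∈ Omega,
      f z = -(((σ / (1 - σ) : ℝ)) : ℂ) *
          (deriv f z / ((α : ℂ) * z ^ ((α : ℂ) - 1) * ek (k - 1) (z ^ (α : ℂ)))) +
        (((1 / (1 - σ) : ℝ)) : ℂ) * ∫ ζ in unitDisk, bergman z ζ * g ζ := by
  have hdisk : unitDisk = ball (0 : ℂ) 1 := by
    ext
    simp [unitDisk]
  rw [hdisk] at hg hL2 ⊢
  intro z hz
  have hgi := integrableOn_of_integrableOn_norm_sq measure_ball_lt_top.ne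
    (hg.continuousOn.aestronglyMeasurable measurableSet_ball) hL2
  have hσ1 : (1 : ℂ) - σ ≠ 0 := by exact_mod_cast (sub_pos.2 hσ.2).ne'
  rw [setIntegral_ball_one_bergman_mul hg hgi hz.1, hext z hz, Dfrac]
  push_cast
  field_simp
  ring

theorem reproducing_property_first_form
    (α σ : ℝ) (hα : α ∈ Set.Ioc (0 : ℝ) 1) (hσ : σ ∈ Set.Ioo (0 : ℝ) 1) (k : ℕ)
    (hk : ∀ z ∈ Omega, ek (k - 1) (z ^ (α : ℂ)) ≠ 0)
    (f g : ℂ → ℂ)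
    (hf : DifferentiableOn ℂ f unitDisk)
    (hg : DifferentiableOn ℂ g unitDisk)
    (hext : ∀ z ∈ Omega, g z = Dfrac α σ k f z)
    (hL2 : IntegrableOn (fun z => ‖g z‖ ^ 2) unitDisk) :
    ∀ z ∈ Omega,
      f z = -(((σ / (1 - σ) : ℝ)) : ℂ) *
          (deriv f z / ((α : ℂ) * z ^ ((α : ℂ) - 1) * ek (k - 1) (z ^ (α : ℂ)))) +
        (((1 / (1 - σ) : ℝ)) : ℂ) * ∫ ζ in unitDisk, bergman z ζ * g ζ :=
  reproducing_property_first_form_general α σ hσ k f g hg hext hL2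
end
end

section
/- Representation formula for the i-derivative across slices: let α ∈ (0,1], σ ∈ (0,1), k ∈ ℕ with e_{k−1}(z^α) ≠ 0 on Ω, let f : 𝔹 → ℍ be slice regular, and let 𝐢, 𝐣 ∈ 𝕊². Then for every z ∈ Ω (noting that Ω is invariant under complex conjugation), D^σ_{α,k,𝐣} f(φ_𝐣(z)) = (1/2)·(1 − 𝐣𝐢)·D^σ_{α,k,𝐢} f(φ_𝐢(z)) + (1/2)·(1 + 𝐣𝐢)·D^σ_{α,k,𝐢} f(φ_𝐢(conj(z))). -/
open MeasureTheory Complex Quaternion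

noncomputable section

/-- The sphere of unit purely imaginary quaternions. -/
def Sph : Set (Quaternion ℝ) := {i : Quaternion ℝ | i.re = 0 ∧ ‖i‖ = 1}

/-- The real-algebra embedding `φ_𝐢 : ℂ → ℍ`, `x + i y ↦ x + y 𝐢`. -/
def phi (i : Quaternion ℝ) (z : ℂ) : Quaternion ℝ := (z.re : Quaternion ℝ) + z.im • i

/-- The open unit ball of the quaternions. -/
def ballH : Set (Quaternion ℝ) := {q : Quaternion ℝ | ‖q‖ < 1}

/-- `E = 𝔹 \ (-1, 0]`: the unit ball minus the real segment `(-1, 0]`. -/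
def Eset : Set (Quaternion ℝ) :=
  ballH \ {q : Quaternion ℝ | ∃ x : ℝ, -1 < x ∧ x ≤ 0 ∧ q = (x : Quaternion ℝ)}

/-- `f` is slice regular on `S`: real-differentiable and satisfying the
Cauchy–Riemann equation `∂f/∂x + 𝐢 ∂f/∂y = 0` on each slice. -/
def SliceRegularOn (f : Quaternion ℝ → Quaternion ℝ) (S : Set (Quaternion ℝ)) : Prop :=
  ∀ q ∈ S, DifferentiableAt ℝ f q ∧
    ∀ i ∈ Sph, (∃ x y : ℝ, q = (x : Quaternion ℝ) + y • i) →
      fderiv ℝ f q 1 + i * fderiv ℝ f q i = 0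

/-- The Cullen derivative `f' = ∂f/∂x`. -/
def cullen (f : Quaternion ℝ → Quaternion ℝ) (q : Quaternion ℝ) : Quaternion ℝ :=
  fderiv ℝ f q 1

/-- The 𝐢-generalized fractal-fractional derivative of a slice regular function,
read through the slice parametrization: `z ∈ Ω ↦ D^σ_{α,k,𝐢} f (φ_𝐢 z)`. -/
def DfracQ (α σ : ℝ) (k : ℕ) (i : Quaternion ℝ) (f : Quaternion ℝ → Quaternion ℝ)
    (z : ℂ) : Quaternion ℝ :=
  (1 - σ) • f (phi i z) +
    σ • (phi i (((α : ℂ) * z ^ ((α : ℂ) - 1) * ek (k - 1) (z ^ (α : ℂ)))⁻¹) *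
      cullen f (phi i z))

/-- The quaternionic Dirichlet-type norm `‖f‖_{𝔇,𝐢}`. -/
def DnormQ (α σ : ℝ) (k : ℕ) (i : Quaternion ℝ) (f : Quaternion ℝ → Quaternion ℝ) : ℝ :=
  Real.sqrt (α * ‖f ((1 / 2 : ℝ) : Quaternion ℝ)‖ ^ 2 +
    ∫ z in Omega, ‖DfracQ α σ k i f z‖ ^ 2)

/-- Membership in the quaternionic Dirichlet-type space `𝔇^σ_{α,k,𝐢}`. -/
def MemDQ (α σ : ℝ) (k : ℕ) (i : Quaternion ℝ) (f : Quaternion ℝ → Quaternion ℝ) : Prop :=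
  SliceRegularOn f Eset ∧ IntegrableOn (fun z => ‖DfracQ α σ k i f z‖ ^ 2) Omega

/-!
On the slice `ℂ_𝐢` the Cauchy–Riemann equation says `∂_y (f ∘ φ_𝐢) = 𝐢 · ∂_x (f ∘ φ_𝐢)`, so
`f ∘ φ_𝐢` is holomorphic for the complex structure `z • q = φ_𝐢(z) q` on `ℍ`. The intertwining
relations `(1 - 𝐣𝐢) φ_𝐢(v) = φ_𝐣(v) (1 - 𝐣𝐢)` and `(1 + 𝐣𝐢) φ_𝐢(v̄) = φ_𝐣(v) (1 + 𝐣𝐢)` make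
`½(1 - 𝐣𝐢) f(φ_𝐢 z) + ½(1 + 𝐣𝐢) f(φ_𝐢 z̄)` holomorphic for the `𝐣`-structure; it agrees with
`f(φ_𝐣 z)` on the real diameter, so the two coincide on the disc by the identity theorem, and
comparing complex derivatives gives the same formula for the Cullen derivative. Off the negative
real axis the coefficient `c(z)` of `f'` satisfies `c(z̄) = conj c(z)`, and the intertwining
relations carry `φ_𝐢(c)` through the formula to `φ_𝐣(c)`.
-/

open ComplexConjugate Filter Topology

section SliceEmbedding

variable {i j : ℍ}

lemma mul_self_of_mem_Sph (hi : i ∈ Sph) : i * i = -1 := by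
  have hstar : star i = -i := Quaternion.star_eq_neg.mpr hi.1
  have hnorm : Quaternion.normSq i = 1 := by
    rw [Quaternion.normSq_eq_norm_mul_self, hi.2, one_mul]
  rw [← neg_neg (i * i), ← mul_neg, ← hstar, Quaternion.self_mul_star, hnorm,
    Quaternion.coe_one]

lemma neg_mem_Sph (hi : i ∈ Sph) : -i ∈ Sph := ⟨by simp [hi.1], by rw [norm_neg, hi.2]⟩

lemma phi_ofReal (i : ℍ) (x : ℝ) : phi i x = x := by simp [phi]

lemma phi_one (i : ℍ) : phi i 1 = 1 := by simp [phi]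

lemma phi_neg (i : ℍ) (z : ℂ) : phi (-i) z = phi i (conj z) := by simp [phi]

lemma star_phi (hi : i ∈ Sph) (z : ℂ) : star (phi i z) = phi i (conj z) := by
  simp [phi, Quaternion.star_eq_neg.mpr hi.1]

def phiAlgHom (i : Sph) : ℂ →ₐ[ℝ] ℍ := Complex.liftAux i.1 (mul_self_of_mem_Sph i.2)

lemma phiAlgHom_apply (i : Sph) (z : ℂ) : phiAlgHom i z = phi i z := by
  simp [phiAlgHom, Complex.liftAux_apply, phi, Quaternion.algebraMap_def]

lemma phi_mul (hi : i ∈ Sph) (z w : ℂ) : phi i (z * w) = phi i z * phi i w := by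
  simp only [← phiAlgHom_apply ⟨i, hi⟩, map_mul]

lemma norm_phi (hi : i ∈ Sph) (z : ℂ) : ‖phi i z‖ = ‖z‖ := by
  have h : Quaternion.normSq (phi i z) = Complex.normSq z := by
    apply Quaternion.coe_injective
    rw [← Quaternion.self_mul_star, star_phi hi, ← phi_mul hi, Complex.mul_conj, phi_ofReal]
  rw [Quaternion.normSq_eq_norm_mul_self, Complex.normSq_eq_norm_sq, sq] at h
  exact (mul_self_inj (norm_nonneg _) (norm_nonneg _)).mp h

lemma phi_mem_ballH (hi : i ∈ Sph) {z : ℂ} (hz : ‖z‖ < 1) : phi i z ∈ ballH := by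
  show ‖phi i z‖ < 1
  rwa [norm_phi hi]

lemma one_sub_mul_mul_phi (hi : i ∈ Sph) (hj : j ∈ Sph) (v : ℂ) :
    (1 - j * i) * phi i v = phi j v * (1 - j * i) := by
  have key : (1 - j * i) * i = j * (1 - j * i) := by
    rw [sub_mul, mul_sub, mul_assoc, mul_self_of_mem_Sph hi, ← mul_assoc, mul_self_of_mem_Sph hj]
    noncomm_ring
  simp only [phi, mul_add, add_mul, mul_smul_comm, smul_mul_assoc, key,
    Quaternion.coe_mul_eq_smul, Quaternion.mul_coe_eq_smul]

lemma one_add_mul_mul_phi_conj (hi : i ∈ Sph) (hj : j ∈ Sph) (v : ℂ) :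
    (1 + j * i) * phi i (conj v) = phi j v * (1 + j * i) := by
  simpa [phi_neg] using one_sub_mul_mul_phi (neg_mem_Sph hi) hj v

def phiCLM (i : ℍ) : ℂ →L[ℝ] ℍ := Complex.reCLM.smulRight 1 + Complex.imCLM.smulRight i

lemma phiCLM_apply (i : ℍ) (z : ℂ) : phiCLM i z = phi i z := by
  simp [phiCLM, phi, ← Quaternion.coe_one, Quaternion.smul_coe]

lemma map_phi_of_cauchyRiemann (hi : i ∈ Sph) (D : ℍ →L[ℝ] ℍ)
    (hD : D 1 + i * D i = 0) (v : ℂ) : D (phi i v) = phi i v * D 1 := by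
  have hDi : D i = i * D 1 :=
    calc D i = -(i * i) * D i := by rw [mul_self_of_mem_Sph hi, neg_neg, one_mul]
      _ = i * D 1 - i * (D 1 + i * D i) := by noncomm_ring
      _ = i * D 1 := by rw [hD, mul_zero, sub_zero]
  rw [← phiCLM_apply]
  simp only [phiCLM, add_apply, ContinuousLinearMap.smulRight_apply,
    Complex.reCLM_apply, Complex.imCLM_apply, map_add, map_smul, hDi, add_mul, smul_mul_assoc,
    one_mul]

end SliceEmbedding

/-- `ℍ` with the complex structure `z • q = φ_𝐣(z) q`. -/
def SliceSpace (_j : Sph) : Type := ℍ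

namespace SliceSpace

variable (j : Sph)

instance : NormedAddCommGroup (SliceSpace j) := inferInstanceAs (NormedAddCommGroup ℍ)

instance : NormedSpace ℝ (SliceSpace j) := inferInstanceAs (NormedSpace ℝ ℍ)

instance : CompleteSpace (SliceSpace j) := inferInstanceAs (CompleteSpace ℍ)

instance : Module ℂ (SliceSpace j) := Module.compHom ℍ (phiAlgHom j).toRingHom

instance : IsScalarTower ℝ ℂ (SliceSpace j) :=
  ⟨fun r z (q : ℍ) => by
    change phiAlgHom j (r • z) * q = r • (phiAlgHom j z * q)
    rw [map_smul, smul_mul_assoc]⟩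

instance : NormedSpace ℂ (SliceSpace j) :=
  ⟨fun z (q : ℍ) => by
    change ‖phiAlgHom j z * q‖ ≤ ‖z‖ * ‖q‖
    rw [phiAlgHom_apply, norm_mul, norm_phi j.2]⟩

end SliceSpace

def toSliceSpace (j : Sph) : ℍ →L[ℝ] SliceSpace j := ContinuousLinearMap.id ℝ ℍ

lemma smul_toSliceSpace (j : Sph) (z : ℂ) (q : ℍ) :
    z • toSliceSpace j q = toSliceSpace j (phi j z * q) :=
  congrArg (· * q) (phiAlgHom_apply j z)

lemma hasDerivAt_toSliceSpace_of_hasFDerivAt {j : Sph} {G : ℂ → ℍ} {L : ℂ →L[ℝ] ℍ} {z : ℂ}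
    (hG : HasFDerivAt G L z) (hL : ∀ v, L v = phi j v * L 1) :
    HasDerivAt (fun w => toSliceSpace j (G w)) (toSliceSpace j (L 1)) z := by
  rw [hasDerivAt_iff_hasFDerivAt]
  refine hasFDerivAt_of_restrictScalars ℝ ((toSliceSpace j).hasFDerivAt.comp z hG) ?_
  ext v
  simp only [ContinuousLinearMap.coe_restrictScalars', ContinuousLinearMap.toSpanSingleton_apply,
    ContinuousLinearMap.comp_apply, smul_toSliceSpace, hL v]

def sliceRepr (i j : ℍ) (g : ℂ → ℍ) (z : ℂ) : ℍ :=
  (1 / 2 : ℝ) • ((1 - j * i) * g z) + (1 / 2 : ℝ) • ((1 + j * i) * g (conj z))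

lemma sliceRepr_ofReal (i j : ℍ) (g : ℂ → ℍ) (x : ℝ) : sliceRepr i j g x = g x := by
  rw [sliceRepr, Complex.conj_ofReal, ← smul_add, ← add_mul, sub_add_add_cancel,
    one_add_one_eq_two, two_mul, ← two_smul ℝ, smul_smul]
  norm_num

lemma sliceRepr_smul_add_smul (i j : ℍ) (a b : ℝ) (g h : ℂ → ℍ) (z : ℂ) :
    sliceRepr i j (fun w => a • g w + b • h w) z =
      a • sliceRepr i j g z + b • sliceRepr i j h z := by
  simp only [sliceRepr, mul_add, mul_smul_comm, smul_add, smul_smul]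
  module

lemma sliceRepr_phi_mul {i j : ℍ} (hi : i ∈ Sph) (hj : j ∈ Sph) {c : ℂ → ℂ} {g : ℂ → ℍ} {z : ℂ}
    (hc : c (conj z) = conj (c z)) :
    sliceRepr i j (fun w => phi i (c w) * g w) z = phi j (c z) * sliceRepr i j g z := by
  simp only [sliceRepr, hc, ← mul_assoc, one_sub_mul_mul_phi hi hj,
    one_add_mul_mul_phi_conj hi hj, mul_add, mul_smul_comm]

namespace SliceRegularOn

variable {f : ℍ → ℍ} {i j : ℍ} {z : ℂ}

lemma hasFDerivAt_comp_phi (hf : SliceRegularOn f ballH) (hi : i ∈ Sph) (hz : ‖z‖ < 1) :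
    HasFDerivAt (fun w => f (phi i w)) ((fderiv ℝ f (phi i z)).comp (phiCLM i)) z := by
  have hfd := (hf _ (phi_mem_ballH hi hz)).1.hasFDerivAt
  rw [← phiCLM_apply] at hfd
  simpa only [Function.comp_def, phiCLM_apply] using hfd.comp z (phiCLM i).hasFDerivAt

lemma hasDerivAt_toSliceSpace_mul_comp_phi (hf : SliceRegularOn f ballH) (hi : i ∈ Sph)
    (hj : j ∈ Sph) {a : ℍ} (ha : ∀ v, a * phi i v = phi j v * a) (hz : ‖z‖ < 1) :
    HasDerivAt (fun w => toSliceSpace ⟨j, hj⟩ (a * f (phi i w)))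
      (toSliceSpace ⟨j, hj⟩ (a * cullen f (phi i z))) z := by
  have hCR := (hf _ (phi_mem_ballH hi hz)).2 i hi ⟨z.re, z.im, rfl⟩
  have hL : ∀ v, (a • (fderiv ℝ f (phi i z)).comp (phiCLM i)) v =
      phi j v * (a * cullen f (phi i z)) := fun v => by
    rw [smul_apply, ContinuousLinearMap.comp_apply, phiCLM_apply,
      map_phi_of_cauchyRiemann hi _ hCR, smul_eq_mul, ← mul_assoc, ha, mul_assoc, cullen]
  have hL1 := (hL 1).trans (by rw [phi_one, one_mul])
  have hG := hasDerivAt_toSliceSpace_of_hasFDerivAt (j := ⟨j, hj⟩)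
    ((hf.hasFDerivAt_comp_phi hi hz).const_mul a) (fun v => by rw [hL, hL1])
  rwa [hL1] at hG

lemma hasDerivAt_toSliceSpace_comp_phi (hf : SliceRegularOn f ballH) (hj : j ∈ Sph)
    (hz : ‖z‖ < 1) :
    HasDerivAt (fun w => toSliceSpace ⟨j, hj⟩ (f (phi j w)))
      (toSliceSpace ⟨j, hj⟩ (cullen f (phi j z))) z := by
  simpa only [one_mul] using hf.hasDerivAt_toSliceSpace_mul_comp_phi hj hj (a := 1) (by simp) hz

lemma hasDerivAt_toSliceSpace_sliceRepr (hf : SliceRegularOn f ballH) (hi : i ∈ Sph)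
    (hj : j ∈ Sph) (hz : ‖z‖ < 1) :
    HasDerivAt (fun w => toSliceSpace ⟨j, hj⟩ (sliceRepr i j (fun w => f (phi i w)) w))
      (toSliceSpace ⟨j, hj⟩ (sliceRepr i j (fun w => cullen f (phi i w)) z)) z := by
  have h₁ := hf.hasDerivAt_toSliceSpace_mul_comp_phi hi hj (one_sub_mul_mul_phi hi hj) hz
  have h₂ := hf.hasDerivAt_toSliceSpace_mul_comp_phi (neg_mem_Sph hi) hj (a := 1 + j * i)
    (by simpa only [phi_neg] using one_add_mul_mul_phi_conj hi hj) hz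
  simp only [phi_neg] at h₂
  simpa only [sliceRepr, map_add, map_smul] using
    (h₁.fun_const_smul (1 / 2 : ℝ)).fun_add (h₂.fun_const_smul (1 / 2 : ℝ))

lemma phi_eq_sliceRepr (hf : SliceRegularOn f ballH) (hi : i ∈ Sph) (hj : j ∈ Sph)
    (hz : ‖z‖ < 1) : f (phi j z) = sliceRepr i j (fun w => f (phi i w)) z := by
  have hanalytic {g : ℂ → SliceSpace ⟨j, hj⟩} (hg : ∀ w : ℂ, ‖w‖ < 1 → DifferentiableAt ℂ g w) :
      AnalyticOnNhd ℂ g (Metric.ball 0 1) :=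
    DifferentiableOn.analyticOnNhd
      (fun w hw => (hg w (mem_ball_zero_iff.mp hw)).differentiableWithinAt) Metric.isOpen_ball
  have h₁ := hanalytic fun w hw => (hf.hasDerivAt_toSliceSpace_comp_phi hj hw).differentiableAt
  have h₂ := hanalytic fun w hw =>
    (hf.hasDerivAt_toSliceSpace_sliceRepr hi hj hw).differentiableAt
  have hreal : ∃ᶠ w in 𝓝[≠] ((0 : ℝ) : ℂ), toSliceSpace ⟨j, hj⟩ (f (phi j w)) =
      toSliceSpace ⟨j, hj⟩ (sliceRepr i j (fun w => f (phi i w)) w) := by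
    have htendsto : Tendsto ((↑) : ℝ → ℂ) (𝓝[≠] 0) (𝓝[≠] ((0 : ℝ) : ℂ)) :=
      Complex.continuous_ofReal.continuousWithinAt.tendsto_nhdsWithin fun _ _ => by simp_all
    refine htendsto.frequently (Frequently.of_forall fun x => ?_)
    rw [sliceRepr_ofReal, phi_ofReal, phi_ofReal]
  exact h₁.eqOn_of_preconnected_of_frequently_eq h₂ (convex_ball _ _).isPreconnected
    (by simp) hreal (by simpa using hz)

lemma cullen_phi_eq_sliceRepr (hf : SliceRegularOn f ballH) (hi : i ∈ Sph) (hj : j ∈ Sph)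
    (hz : ‖z‖ < 1) : cullen f (phi j z) = sliceRepr i j (fun w => cullen f (phi i w)) z := by
  have hnhds : ∀ᶠ w in 𝓝 z, toSliceSpace ⟨j, hj⟩ (f (phi j w)) =
      toSliceSpace ⟨j, hj⟩ (sliceRepr i j (fun w => f (phi i w)) w) := by
    filter_upwards [Metric.isOpen_ball.mem_nhds (mem_ball_zero_iff.mpr hz)] with w hw
    rw [hf.phi_eq_sliceRepr hi hj (mem_ball_zero_iff.mp hw)]
  exact (hf.hasDerivAt_toSliceSpace_comp_phi hj hz).unique
    ((hf.hasDerivAt_toSliceSpace_sliceRepr hi hj hz).congr_of_eventuallyEq hnhds)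

end SliceRegularOn

def fracCoeff (α : ℝ) (k : ℕ) (z : ℂ) : ℂ :=
  ((α : ℂ) * z ^ ((α : ℂ) - 1) * ek (k - 1) (z ^ (α : ℂ)))⁻¹

lemma ek_conj (k : ℕ) (w : ℂ) : ek k (conj w) = conj (ek k w) := by
  simp only [ek, map_sum, map_div₀, map_pow, map_natCast]

lemma fracCoeff_conj (α : ℝ) (k : ℕ) {z : ℂ} (hz : z.arg ≠ Real.pi) :
    fracCoeff α k (conj z) = conj (fracCoeff α k z) := by
  have hpow (s : ℝ) : conj z ^ (s : ℂ) = conj (z ^ (s : ℂ)) := by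
    rw [Complex.conj_cpow z _ hz, Complex.conj_ofReal]
  have hpow' := hpow (α - 1)
  push_cast at hpow'
  simp only [fracCoeff, hpow', hpow α, ek_conj, map_inv₀, map_mul, Complex.conj_ofReal]

lemma arg_ne_pi_of_mem_Omega {z : ℂ} (hz : z ∈ Omega) : z.arg ≠ Real.pi := by
  intro h
  rw [Complex.arg_eq_pi_iff] at h
  have hre : -1 < z.re := by
    linarith [abs_lt.mp ((Complex.abs_re_le_norm z).trans_lt hz.1)]
  exact hz.2 ⟨h.2, hre, h.1.le⟩

theorem representation_formula_for_derivative_general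
    (α σ : ℝ) (k : ℕ)
    (f : Quaternion ℝ → Quaternion ℝ) (hf : SliceRegularOn f ballH)
    (i j : Quaternion ℝ) (hi : i ∈ Sph) (hj : j ∈ Sph) :
    ∀ z ∈ Omega,
      DfracQ α σ k j f z =
        (1 / 2 : ℝ) • ((1 - j * i) * DfracQ α σ k i f z) +
          (1 / 2 : ℝ) • ((1 + j * i) * DfracQ α σ k i f ((starRingEnd ℂ) z)) := by
  intro z hz
  have hz1 : ‖z‖ < 1 := hz.1
  calc DfracQ α σ k j f z
      = (1 - σ) • f (phi j z) + σ • (phi j (fracCoeff α k z) * cullen f (phi j z)) := rfl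
    _ = (1 - σ) • sliceRepr i j (fun w => f (phi i w)) z +
          σ • (phi j (fracCoeff α k z) * sliceRepr i j (fun w => cullen f (phi i w)) z) := by
        rw [hf.phi_eq_sliceRepr hi hj hz1, hf.cullen_phi_eq_sliceRepr hi hj hz1]
    _ = (1 - σ) • sliceRepr i j (fun w => f (phi i w)) z +
          σ • sliceRepr i j (fun w => phi i (fracCoeff α k w) * cullen f (phi i w)) z := by
        rw [sliceRepr_phi_mul hi hj (fracCoeff_conj α k (arg_ne_pi_of_mem_Omega hz))]
    _ = sliceRepr i j (DfracQ α σ k i f) z := (sliceRepr_smul_add_smul i j _ _ _ _ z).symm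

theorem representation_formula_for_derivative
    (α σ : ℝ) (hα : α ∈ Set.Ioc (0 : ℝ) 1) (hσ : σ ∈ Set.Ioo (0 : ℝ) 1) (k : ℕ)
    (hk : ∀ z ∈ Omega, ek (k - 1) (z ^ (α : ℂ)) ≠ 0)
    (f : Quaternion ℝ → Quaternion ℝ) (hf : SliceRegularOn f ballH)
    (i j : Quaternion ℝ) (hi : i ∈ Sph) (hj : j ∈ Sph) :
    ∀ z ∈ Omega,
      DfracQ α σ k j f z =
        (1 / 2 : ℝ) • ((1 - j * i) * DfracQ α σ k i f z) +
          (1 / 2 : ℝ) • ((1 + j * i) * DfracQ α σ k i f ((starRingEnd ℂ) z)) :=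
  representation_formula_for_derivative_general α σ k f hf i j hi hj

end
end
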